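/- arXiv:1310.7738 — 4 statements merged into one kernel-verified Lean document; each statement's English description precedes it below -/
import Mathlib

section
/- Let E be a finite-dimensional k-vector space and T an endomorphism of E whose annihilator polynomial is a_T(x) = p(x)^n with p(x) monic irreducible of degree d, and let K = k[x]/(p(x)). Fix 1 ≤ i ≤ n and set W_i = Ker p(T)^{i-1} + p(T)(Ker p(T)^{i+1}), with π_i : Ker p(T)^i → Ker p(T)^i / W_i the natural projection. If {ē_h}_{1≤h≤ν} is a basis of Ker p(T)^i / W_i as a K-vector space and {e_h}_{1≤h≤ν} are vectors of Ker p(T)^i with π_i(e_h) = ē_h for all h, then the family ⋃_{1≤h≤ν} {e_h, T(e_h), T²(e_h), …, T^{d-1}(e_h)} is linearly independent over k in Ker p(T)^i. -/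
open Polynomial Module

universe u v w

section Preamble

variable {k : Type u} [Field k] {V : Type v} [AddCommGroup V] [Module k V]

/-- `Ker p(f)^i`, as a `k[X]`-submodule of `V` viewed as a `k[X]`-module via `f`
(i.e. of the type synonym `Module.AEval' f`, on which `q(x) • v = q(f)(v)`). -/
noncomputable def kerP (f : Module.End k V) (p : k[X]) (i : ℕ) :
    Submodule k[X] (Module.AEval' f) :=
  Submodule.torsionBy k[X] (Module.AEval' f) (p ^ i)

/-- `W_i = Ker p(f)^{i-1} + p(f)(Ker p(f)^{i+1})`, as a `k[X]`-submodule. -/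
noncomputable def wSub (f : Module.End k V) (p : k[X]) (i : ℕ) :
    Submodule k[X] (Module.AEval' f) :=
  kerP f p (i - 1) ⊔ (kerP f p (i + 1)).map (LinearMap.lsmul k[X] (Module.AEval' f) p)

/-- The quotient `Ker p(f)^i / (Ker p(f)^{i-1} + p(f)(Ker p(f)^{i+1}))`, as a `k[X]`-module. -/
abbrev Qmod (f : Module.End k V) (p : k[X]) (i : ℕ) : Type v :=
  kerP f p i ⧸ (wSub f p i).comap (kerP f p i).subtype

theorem qmod_isTorsionBy (f : Module.End k V) (p : k[X]) (i : ℕ) :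
    Module.IsTorsionBy k[X] (Qmod f p i) p := by
  intro x
  obtain ⟨⟨v, hv⟩, rfl⟩ := Submodule.Quotient.mk_surjective _ x
  rw [← Submodule.Quotient.mk_smul, Submodule.Quotient.mk_eq_zero]
  refine Submodule.mem_comap.mpr (Submodule.mem_sup_right ?_)
  refine Submodule.mem_map.mpr ⟨v, ?_, by simp⟩
  rw [kerP, Submodule.mem_torsionBy_iff] at hv ⊢
  rw [pow_succ', mul_smul, hv, smul_zero]

/-- The `K = k[x]/(p(x))`-vector space structure on
`Ker p(f)^i / (Ker p(f)^{i-1} + p(f)(Ker p(f)^{i+1}))`, induced by the `k[x]`-module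
structure `q(x) • v = q(f)(v)`. -/
noncomputable instance qmodModule (f : Module.End k V) (p : k[X]) (i : ℕ) :
    Module (k[X] ⧸ Ideal.span {p}) (Qmod f p i) :=
  (qmod_isTorsionBy f p i).module

/-- The invariant `ν_i(V, p(f))`: the dimension of
`Ker p(f)^i / (Ker p(f)^{i-1} + p(f)(Ker p(f)^{i+1}))` as a vector space over
`K = k[x]/(p(x))`. -/
noncomputable def nu (f : Module.End k V) (p : k[X]) (i : ℕ) : Cardinal.{v} :=
  Module.rank (k[X] ⧸ Ideal.span {p}) (Qmod f p i)

end Preamble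

/-! The images in `Ker p(T)^i / W_i` of the vectors `T^j e_h = x^j • e_h` are the products
`x̄^j • ē_h` of the `k`-basis `1, x̄, …, x̄^{d-1}` of `K = k[x]/(p)` with the `K`-basis `ē_h`, hence
`k`-linearly independent; linear independence lifts along the projection. -/

section

variable {k : Type*} [Field k] {p : k[X]}

theorem linearIndependent_mk_X_pow (hp : p ≠ 0) :
    LinearIndependent k fun j : Fin p.natDegree =>
      Ideal.Quotient.mk (Ideal.span {p}) (X ^ (j : ℕ)) := by
  have h := (AdjoinRoot.powerBasis hp).basis.linearIndependent
  rw [PowerBasis.coe_basis] at h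
  simp only [map_pow]
  exact h

variable {M Q : Type*} [AddCommGroup M] [Module k[X] M] [Module k M] [IsScalarTower k k[X] M]
  [AddCommGroup Q] [Module k[X] Q] [Module k Q] [IsScalarTower k k[X] Q]
  [Module (k[X] ⧸ Ideal.span {p}) Q] [IsScalarTower k[X] (k[X] ⧸ Ideal.span {p}) Q]

theorem linearIndependent_X_pow_smul (hp : p ≠ 0) {ι : Type*} (π : M →ₗ[k[X]] Q) (x : ι → M)
    (hx : LinearIndependent (k[X] ⧸ Ideal.span {p}) (π ∘ x)) :
    LinearIndependent k fun hj : ι × Fin p.natDegree => (X ^ (hj.2 : ℕ) : k[X]) • x hj.1 := by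
  have := IsScalarTower.to₁₃₄ k k[X] (k[X] ⧸ Ideal.span {p}) Q
  have h := linearIndependent_smul (linearIndependent_mk_X_pow hp) hx
  refine LinearIndependent.of_comp (π.restrictScalars k) ?_
  convert h.comp Prod.swap Prod.swap_injective using 1
  ext ⟨h, j⟩
  simp only [LinearMap.coe_restrictScalars, Function.comp_apply, map_smul,
    ← Ideal.Quotient.algebraMap_eq, algebraMap_smul, Prod.swap_prod_mk]

end

theorem stmt_0_general {k : Type u} [Field k] {E : Type v} [AddCommGroup E] [Module k E]
    (T : Module.End k E) (p : k[X]) (d : ℕ)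
    (hmonic : p.Monic) (hdeg : p.natDegree = d)
    (i : ℕ)
    (ν : ℕ) (e : Fin ν → E)
    (he : ∀ h, Module.AEval'.of T (e h) ∈ kerP T p i)
    (b : Basis (Fin ν) (k[X] ⧸ Ideal.span {p}) (Qmod T p i))
    (hb : ∀ h, b h = Submodule.Quotient.mk ⟨Module.AEval'.of T (e h), he h⟩) :
    LinearIndependent k fun hm : Fin ν × Fin d => (T ^ (hm.2 : ℕ)) (e hm.1) := by
  subst hdeg
  let x : Fin ν → kerP T p i := fun h => ⟨Module.AEval'.of T (e h), he h⟩
  have hx : LinearIndependent (k[X] ⧸ Ideal.span {p})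
      (((wSub T p i).comap (kerP T p i).subtype).mkQ ∘ x) := by
    convert b.linearIndependent
    exact funext fun h => (hb h).symm
  let incl : kerP T p i →ₗ[k] E :=
    (Module.AEval'.of T).symm.toLinearMap ∘ₗ (kerP T p i).subtype.restrictScalars k
  have hincl : Function.Injective incl :=
    (Module.AEval'.of T).symm.injective.comp Subtype.val_injective
  have hfamily : (fun hm : Fin ν × Fin p.natDegree => (T ^ (hm.2 : ℕ)) (e hm.1)) =
      incl ∘ fun hj => (X ^ (hj.2 : ℕ) : k[X]) • x hj.1 := by
    ext ⟨h, j⟩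
    simp [incl, x, Module.AEval'.X_pow_smul_of]
  rw [hfamily]
  exact (linearIndependent_X_pow_smul hmonic.ne_zero _ x hx).map' incl
    (LinearMap.ker_eq_bot.mpr hincl)

/-- Let `E` be a finite-dimensional `k`-vector space and `T` an endomorphism
of `E` whose annihilator polynomial is `a_T(x) = p(x)^n` with `p(x)` monic irreducible of
degree `d`, and let `K = k[x]/(p(x))`.  Fix `1 ≤ i ≤ n` and set
`W_i = Ker p(T)^{i-1} + p(T)(Ker p(T)^{i+1})`, with `π_i` the natural projection onto
`Ker p(T)^i / W_i`.  If `{ē_h}_{1 ≤ h ≤ ν}` is a `K`-basis of `Ker p(T)^i / W_i` and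
`{e_h}_{1 ≤ h ≤ ν}` are vectors of `Ker p(T)^i` with `π_i(e_h) = ē_h` for all `h`, then the
family `⋃_h {e_h, T e_h, …, T^{d-1} e_h}` is linearly independent over `k`. -/
theorem stmt_0 {k : Type u} [Field k] {E : Type v} [AddCommGroup E] [Module k E]
    [FiniteDimensional k E]
    (T : Module.End k E) (p : k[X]) (n d : ℕ)
    (hmonic : p.Monic) (hirr : Irreducible p) (hdeg : p.natDegree = d)
    (hmin : minpoly k T = p ^ n)
    (i : ℕ) (hi1 : 1 ≤ i) (hin : i ≤ n)
    (ν : ℕ) (e : Fin ν → E)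
    (he : ∀ h, Module.AEval'.of T (e h) ∈ kerP T p i)
    (b : Basis (Fin ν) (k[X] ⧸ Ideal.span {p}) (Qmod T p i))
    (hb : ∀ h, b h = Submodule.Quotient.mk ⟨Module.AEval'.of T (e h), he h⟩) :
    LinearIndependent k fun hm : Fin ν × Fin d => (T ^ (hm.2 : ℕ)) (e hm.1) :=
  stmt_0_general T p d hmonic hdeg i ν e he b hb
end

section
/- Let E be a finite-dimensional k-vector space and T an endomorphism of E whose annihilator polynomial is a_T(x) = p(x)^n with p(x) monic irreducible of degree d, and let K = k[x]/(p(x)). Fix 1 ≤ i ≤ n and set W_i = Ker p(T)^{i-1} + p(T)(Ker p(T)^{i+1}), with π_i the natural projection onto Ker p(T)^i / W_i. If {e_h}_{1≤h≤ν} ⊆ Ker p(T)^i are vectors whose images {π_i(e_h)} form a K-basis of Ker p(T)^i / W_i, then the k-subspace H_i = span_k ⋃_{1≤h≤ν} {e_h, T(e_h), …, T^{d-1}(e_h)} is a complementary subspace of W_i in Ker p(T)^i, i.e. Ker p(T)^i = W_i ⊕ H_i. -/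
open Polynomial Module

universe u v w

/-!
Since `1, x, …, x^{d-1}` is a `k`-basis of `K`, the classes `x^j · π_i(e_h)` form a `k`-basis
of `Ker p(T)^i / W_i`, and `x^j · e_h` is `T^j e_h`. Vectors whose images under a linear map
form a basis of its target span a complement of its kernel; applied to the projection
`π_i` (whose kernel is `W_i`) inside `Ker p(T)^i`, this gives `Ker p(T)^i = W_i ⊕ H_i`.
-/

open Submodule

namespace LinearMap

variable {R M Q : Type*} [Ring R] [AddCommGroup M] [Module R M] [AddCommGroup Q] [Module R Q]

theorem isCompl_ker_range_of_comp_eq_id {φ : M →ₗ[R] Q} {s : Q →ₗ[R] M}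
    (h : φ ∘ₗ s = LinearMap.id) : IsCompl (ker φ) (range s) := by
  have hφs (y : Q) : φ (s y) = y := LinearMap.congr_fun h y
  constructor
  · rw [disjoint_def]
    rintro _ hker ⟨y, rfl⟩
    rw [mem_ker, hφs] at hker
    rw [hker, map_zero]
  · rw [codisjoint_iff, eq_top_iff]
    intro x _
    refine mem_sup.mpr ⟨x - s (φ x), ?_, s (φ x), mem_range_self s _, sub_add_cancel x _⟩
    rw [mem_ker, map_sub, hφs, sub_self]

theorem isCompl_ker_span_of_apply_eq_basis {ι : Type*} (φ : M →ₗ[R] Q) (b : Basis ι R Q)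
    (v : ι → M) (hv : ∀ j, φ (v j) = b j) : IsCompl (ker φ) (span R (Set.range v)) := by
  rw [← b.constr_range (S := ℕ)]
  exact isCompl_ker_range_of_comp_eq_id (b.ext fun j => by simp [hv])

end LinearMap

section AEval

variable {k : Type u} [Field k] {E : Type v} [AddCommGroup E] [Module k E]
  (T : Module.End k E) (p : k[X])

theorem map_kerP (j : ℕ) :
    ((kerP T p j).restrictScalars k).map (AEval'.of T).symm.toLinearMap
      = LinearMap.ker (aeval T p ^ j) := by
  ext v
  rw [mem_map_equiv, LinearEquiv.symm_symm, restrictScalars_mem, kerP, mem_torsionBy_iff,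
    LinearMap.mem_ker, ← map_pow, ← (AEval'.of T).symm.map_eq_zero_iff, AEval.of_symm_smul,
    LinearEquiv.symm_apply_apply, Module.End.smul_def]

theorem of_symm_comp_lsmul :
    (AEval'.of T).symm.toLinearMap ∘ₗ (LinearMap.lsmul k[X] (AEval' T) p).restrictScalars k
      = aeval T p ∘ₗ (AEval'.of T).symm.toLinearMap := by
  ext m
  exact AEval.of_symm_smul (a := T) p m

theorem map_wSub (i : ℕ) :
    ((wSub T p i).restrictScalars k).map (AEval'.of T).symm.toLinearMap
      = LinearMap.ker (aeval T p ^ (i - 1)) ⊔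
        (LinearMap.ker (aeval T p ^ (i + 1))).map (aeval T p) := by
  rw [wSub, restrictScalars_sup, Submodule.map_sup, map_kerP, restrictScalars_map,
    ← Submodule.map_comp, of_symm_comp_lsmul, Submodule.map_comp, map_kerP]

theorem wSub_le_kerP (i : ℕ) : wSub T p i ≤ kerP T p i := by
  refine sup_le (torsionBy_le_torsionBy_of_dvd _ _ (pow_dvd_pow p (Nat.sub_le i 1))) ?_
  rintro _ ⟨m, hm, rfl⟩
  rw [SetLike.mem_coe, kerP, mem_torsionBy_iff] at hm
  rw [kerP, mem_torsionBy_iff, LinearMap.lsmul_apply, ← mul_smul, ← pow_succ, hm]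

noncomputable def kerPSubtype (i : ℕ) : kerP T p i →ₗ[k] E :=
  (AEval'.of T).symm.toLinearMap ∘ₗ (kerP T p i).subtype.restrictScalars k

theorem kerPSubtype_injective (i : ℕ) : Function.Injective (kerPSubtype T p i) :=
  (AEval'.of T).symm.injective.comp Subtype.val_injective

theorem range_kerPSubtype (i : ℕ) :
    LinearMap.range (kerPSubtype T p i) = LinearMap.ker (aeval T p ^ i) := by
  rw [kerPSubtype, LinearMap.range_comp, LinearMap.range_restrictScalars, range_subtype, map_kerP]

theorem map_kerPSubtype_ker_mkQ (i : ℕ) :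
    (LinearMap.ker (((wSub T p i).comap (kerP T p i).subtype).mkQ.restrictScalars k)).map
        (kerPSubtype T p i)
      = LinearMap.ker (aeval T p ^ (i - 1)) ⊔
        (LinearMap.ker (aeval T p ^ (i + 1))).map (aeval T p) := by
  rw [kerPSubtype, Submodule.map_comp, LinearMap.ker_restrictScalars, ker_mkQ,
    ← restrictScalars_map, map_comap_subtype, inf_eq_right.mpr (wSub_le_kerP T p i), map_wSub]

theorem kerPSubtype_X_pow_smul {i : ℕ} {v : E} (hv : AEval'.of T v ∈ kerP T p i) (j : ℕ) :
    kerPSubtype T p i ((X ^ j : k[X]) • ⟨AEval'.of T v, hv⟩) = (T ^ j) v :=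
  congrArg (AEval'.of T).symm (AEval'.X_pow_smul_of T v j)

end AEval

theorem stmt_1_general {k : Type u} [Field k] {E : Type v} [AddCommGroup E] [Module k E]
    (T : Module.End k E) (p : k[X]) (d : ℕ)
    (hmonic : p.Monic) (hdeg : p.natDegree = d)
    (i : ℕ)
    (ν : ℕ) (e : Fin ν → E)
    (he : ∀ h, Module.AEval'.of T (e h) ∈ kerP T p i)
    (b : Basis (Fin ν) (k[X] ⧸ Ideal.span {p}) (Qmod T p i))
    (hb : ∀ h, b h = Submodule.Quotient.mk ⟨Module.AEval'.of T (e h), he h⟩)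
    (H : Submodule k E)
    (hH : H = Submodule.span k
      (Set.range fun hm : Fin ν × Fin d => (T ^ (hm.2 : ℕ)) (e hm.1))) :
    Disjoint (LinearMap.ker (aeval T p ^ (i - 1)) ⊔
        (LinearMap.ker (aeval T p ^ (i + 1))).map (aeval T p)) H ∧
      (LinearMap.ker (aeval T p ^ (i - 1)) ⊔
          (LinearMap.ker (aeval T p ^ (i + 1))).map (aeval T p)) ⊔ H
        = LinearMap.ker (aeval T p ^ i) := by
  subst hH hdeg
  let φ := ((wSub T p i).comap (kerP T p i).subtype).mkQ.restrictScalars k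
  let v : Fin p.natDegree × Fin ν → kerP T p i := fun jh => (X ^ (jh.1 : ℕ) : k[X]) • ⟨_, he jh.2⟩
  -- the power basis `1, x, …, x^{d-1}` of `K` over `k` turns `b` into the `k`-basis `x^j • b h`
  let kb : Basis (Fin p.natDegree) k (k[X] ⧸ Ideal.span {p}) :=
    (AdjoinRoot.powerBasis' hmonic).basis
  have hφv (jh) : φ (v jh) = kb.smulTower b jh := by
    have hkb : kb jh.1 = AdjoinRoot.mk p (X ^ (jh.1 : ℕ)) := by
      rw [map_pow, AdjoinRoot.mk_X]
      exact (AdjoinRoot.powerBasis' hmonic).basis_eq_pow jh.1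
    rw [Basis.smulTower_apply, hkb, hb]
    rfl
  have hcompl := φ.isCompl_ker_span_of_apply_eq_basis _ v hφv
  have hspan : (span k (Set.range v)).map (kerPSubtype T p i) = span k
      (Set.range fun hm : Fin ν × Fin p.natDegree => (T ^ (hm.2 : ℕ)) (e hm.1)) := by
    rw [Submodule.map_span, ← Set.range_comp, ← (Equiv.prodComm _ _).surjective.range_comp]
    congr 2
    ext ⟨h, j⟩
    exact kerPSubtype_X_pow_smul T p (he h) j
  rw [← map_kerPSubtype_ker_mkQ, ← hspan, ← range_kerPSubtype]
  refine ⟨disjoint_map (kerPSubtype_injective T p i) hcompl.disjoint, ?_⟩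
  rw [← Submodule.map_sup, hcompl.sup_eq_top, Submodule.map_top]

/-- Let `E` be a finite-dimensional `k`-vector space and `T` an endomorphism
of `E` whose annihilator polynomial is `a_T(x) = p(x)^n` with `p(x)` monic irreducible of
degree `d`, and let `K = k[x]/(p(x))`.  Fix `1 ≤ i ≤ n` and set
`W_i = Ker p(T)^{i-1} + p(T)(Ker p(T)^{i+1})`.  If `{e_h}_{1 ≤ h ≤ ν} ⊆ Ker p(T)^i` are
vectors whose images under the natural projection form a `K`-basis of `Ker p(T)^i / W_i`,
then `H_i = span_k ⋃_h {e_h, T e_h, …, T^{d-1} e_h}` is a complementary subspace of `W_i` in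
`Ker p(T)^i`, i.e. `Ker p(T)^i = W_i ⊕ H_i`. -/
theorem stmt_1 {k : Type u} [Field k] {E : Type v} [AddCommGroup E] [Module k E]
    [FiniteDimensional k E]
    (T : Module.End k E) (p : k[X]) (n d : ℕ)
    (hmonic : p.Monic) (hirr : Irreducible p) (hdeg : p.natDegree = d)
    (hmin : minpoly k T = p ^ n)
    (i : ℕ) (hi1 : 1 ≤ i) (hin : i ≤ n)
    (ν : ℕ) (e : Fin ν → E)
    (he : ∀ h, Module.AEval'.of T (e h) ∈ kerP T p i)
    (b : Basis (Fin ν) (k[X] ⧸ Ideal.span {p}) (Qmod T p i))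
    (hb : ∀ h, b h = Submodule.Quotient.mk ⟨Module.AEval'.of T (e h), he h⟩)
    (H : Submodule k E)
    (hH : H = Submodule.span k
      (Set.range fun hm : Fin ν × Fin d => (T ^ (hm.2 : ℕ)) (e hm.1))) :
    Disjoint (LinearMap.ker (aeval T p ^ (i - 1)) ⊔
        (LinearMap.ker (aeval T p ^ (i + 1))).map (aeval T p)) H ∧
      (LinearMap.ker (aeval T p ^ (i - 1)) ⊔
          (LinearMap.ker (aeval T p ^ (i + 1))).map (aeval T p)) ⊔ H
        = LinearMap.ker (aeval T p ^ i) :=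
  stmt_1_general T p d hmonic hdeg i ν e he b hb H hH
end

section
/- Let V be an arbitrary k-vector space and f an endomorphism of V whose annihilator polynomial is a_f(x) = p(x)^n with p(x) monic irreducible. Suppose that for each j with i+1 ≤ j ≤ n, H_j is a k-subspace of Ker p(f)^j satisfying Ker p(f)^j = (Ker p(f)^{j-1} + p(f)(Ker p(f)^{j+1})) ⊕ H_j, the H_j being chosen recursively as in the construction of Jordan bases. Then for every 1 ≤ i ≤ n the sum Ker p(f)^{i-1} + p(f)^{n-i}(H_n) + p(f)^{n-i-1}(H_{n-1}) + ⋯ + p(f)(H_{i+1}) is direct and equals Ker p(f)^{i-1} + p(f)(Ker p(f)^{i+1}). -/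
/-!
Write `P = p(f)` and `K j = ker P^j`. For `t ≥ 1` the summands `K (i-1), P^t H (i+t), …,
P^(n-i) H n` add up to `K (i-1) + P^t K (i+t)`: splitting
`K (i+t) = K (i+t-1) + P K (i+t+1) + H (i+t)` and using `P^t K (i+t-1) ⊆ K (i-1)` peels off
the summand `P^t H (i+t)`. This summand meets the others trivially: if `P^t h = y + P^(t+1) z`
with `y ∈ K (i-1)`, then `h - P z ∈ K (i+t-1)`, so `h ∈ K (i+t-1) + P K (i+t+1)`, which meets
`H (i+t)` only in `0`. Downward induction on `t`, starting from `P^(n-i+1) V ⊆ K (i-1)`, gives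
directness and the value of the sum at `t = 1`.
-/

section SupIndep

variable {ι α : Type*} [CompleteLattice α] {f : ι → α} {s : Finset ι}

theorem iSup_eq_finset_sup_of_eq_bot (hf : ∀ i ∉ s, f i = ⊥) : ⨆ i, f i = s.sup f := by
  refine le_antisymm (iSup_le fun i => ?_) (Finset.sup_le fun i _ => le_iSup f i)
  by_cases hi : i ∈ s
  · exact Finset.le_sup hi
  · exact (hf i hi).symm ▸ bot_le

theorem iSupIndep_of_supIndep_of_eq_bot [DecidableEq ι] (hs : s.SupIndep f)
    (hf : ∀ i ∉ s, f i = ⊥) : iSupIndep f := by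
  refine iSupIndep_def.2 fun i => ?_
  by_cases hi : i ∈ s
  · refine (Finset.supIndep_iff_disjoint_erase.1 hs i hi).mono_right (iSup₂_le fun j hj => ?_)
    by_cases hjs : j ∈ s
    · exact Finset.le_sup (Finset.mem_erase.2 ⟨hj, hjs⟩)
    · exact (hf j hjs).symm ▸ bot_le
  · exact (hf i hi).symm ▸ disjoint_bot_left

end SupIndep

namespace Module.End

open LinearMap

variable {R M : Type*} [Ring R] [AddCommGroup M] [Module R M] (P : Module.End R M)

theorem map_pow_le_ker_pow {a b : ℕ} (hP : P ^ (a + b) = 0) (X : Submodule R M) :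
    X.map (P ^ b) ≤ ker (P ^ a) := by
  rintro _ ⟨x, -, rfl⟩
  rw [mem_ker, ← mul_apply, ← pow_add, hP, LinearMap.zero_apply]

theorem map_pow_ker_pow_add_le (a t : ℕ) : (ker (P ^ (a + t))).map (P ^ t) ≤ ker (P ^ a) := by
  rintro _ ⟨x, hx, rfl⟩
  rwa [mem_ker, ← mul_apply, ← pow_add]

theorem map_pow_map (t : ℕ) (X : Submodule R M) :
    (X.map P).map (P ^ t) = X.map (P ^ (t + 1)) := by
  rw [pow_succ, mul_eq_comp, Submodule.map_comp]

variable {P}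

theorem disjoint_map_pow {a t j : ℕ} (hj : a + t + 1 = j) {H : Submodule R M}
    (hH : Disjoint (ker (P ^ (j - 1)) ⊔ (ker (P ^ (j + 1))).map P) H) :
    Disjoint (H.map (P ^ t)) (ker (P ^ a) ⊔ (ker (P ^ (j + 1))).map (P ^ (t + 1))) := by
  subst hj
  rw [Submodule.disjoint_def]
  rintro _ ⟨h, hH', rfl⟩ hx
  obtain ⟨y, hy, _, ⟨z, hz, rfl⟩, hyz⟩ := Submodule.mem_sup.1 hx
  have hdiff : h - P z ∈ ker (P ^ (a + t)) := by
    rw [mem_ker, pow_add, mul_apply, map_sub, ← mul_apply (P ^ t), ← pow_succ, ← hyz,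
      add_sub_cancel_right, hy]
  have hh : h ∈ ker (P ^ (a + t + 1 - 1)) ⊔ (ker (P ^ (a + t + 1 + 1))).map P := by
    rw [Nat.add_sub_cancel, ← sub_add_cancel h (P z)]
    exact Submodule.add_mem_sup hdiff ⟨z, hz, rfl⟩
  rw [Submodule.disjoint_def.1 hH h hh hH', map_zero]

theorem ker_sup_map_pow_ker_eq {a t j : ℕ} (hj : a + t + 1 = j) {H : Submodule R M}
    (hH : ker (P ^ (j - 1)) ⊔ (ker (P ^ (j + 1))).map P ⊔ H = ker (P ^ j)) :
    ker (P ^ a) ⊔ (ker (P ^ j)).map (P ^ t) =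
      ker (P ^ a) ⊔ (ker (P ^ (j + 1))).map (P ^ (t + 1)) ⊔ H.map (P ^ t) := by
  subst hj
  rw [← hH, Nat.add_sub_cancel, Submodule.map_sup, Submodule.map_sup, map_pow_map,
    ← sup_assoc, ← sup_assoc, sup_eq_left.2 (map_pow_ker_pow_add_le P a t)]

section Summands

variable {P : Module.End R M} {n i : ℕ} {H F : ℕ → Submodule R M}

theorem sup_insert_zero_Icc_eq (hP : P ^ n = 0) (hi : 1 ≤ i)
    (hcompl : ∀ j, i + 1 ≤ j → j ≤ n →
      ker (P ^ (j - 1)) ⊔ (ker (P ^ (j + 1))).map P ⊔ H j = ker (P ^ j))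
    (hF0 : F 0 = ker (P ^ (i - 1)))
    (hFm : ∀ m, 1 ≤ m → m ≤ n - i → F m = (H (i + m)).map (P ^ m))
    {t : ℕ} (ht1 : 1 ≤ t) (ht : t ≤ n - i + 1) :
    (insert 0 (Finset.Icc t (n - i))).sup F =
      ker (P ^ (i - 1)) ⊔ (ker (P ^ (i + t))).map (P ^ t) := by
  induction ht using Nat.decreasingInduction with
  | self =>
    have hP' : P ^ (i - 1 + (n - i + 1)) = 0 := pow_eq_zero_of_le (by omega) hP
    simp [hF0, map_pow_le_ker_pow P hP']
  | of_succ t ht ih =>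
    rw [← Finset.insert_Icc_add_one_left_eq_Icc (by omega : t ≤ n - i), Finset.insert_comm,
      Finset.sup_insert, ih (by omega), hFm t ht1 (by omega),
      ker_sup_map_pow_ker_eq (by omega) (hcompl (i + t) (by omega) (by omega)), sup_comm,
      ← add_assoc]

theorem supIndep_insert_zero_Icc (hP : P ^ n = 0) (hi : 1 ≤ i)
    (hcompl : ∀ j, i + 1 ≤ j → j ≤ n →
      Disjoint (ker (P ^ (j - 1)) ⊔ (ker (P ^ (j + 1))).map P) (H j) ∧
        ker (P ^ (j - 1)) ⊔ (ker (P ^ (j + 1))).map P ⊔ H j = ker (P ^ j))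
    (hF0 : F 0 = ker (P ^ (i - 1)))
    (hFm : ∀ m, 1 ≤ m → m ≤ n - i → F m = (H (i + m)).map (P ^ m))
    {t : ℕ} (ht1 : 1 ≤ t) (ht : t ≤ n - i + 1) :
    (insert 0 (Finset.Icc t (n - i))).SupIndep F := by
  induction ht using Nat.decreasingInduction with
  | self => simp
  | of_succ t ht ih =>
    rw [← Finset.insert_Icc_add_one_left_eq_Icc (by omega : t ≤ n - i), Finset.insert_comm]
    refine (ih (by omega)).insert ?_
    rw [sup_insert_zero_Icc_eq hP hi (fun j hj hjn => (hcompl j hj hjn).2) hF0 hFm (by omega)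
      (by omega), hFm t ht1 (by omega), ← add_assoc]
    exact disjoint_map_pow (by omega) (hcompl (i + t) (by omega) (by omega)).1

end Summands

end Module.End

open Polynomial

theorem stmt_8_general {k : Type*} [Field k] {V : Type*} [AddCommGroup V] [Module k V]
    (f : Module.End k V) (p : k[X]) (n : ℕ)
    (hmin : minpoly k f = p ^ n)
    (i : ℕ) (hi1 : 1 ≤ i)
    (H : ℕ → Submodule k V)
    (hcompl : ∀ j, i + 1 ≤ j → j ≤ n →
      Disjoint (LinearMap.ker (aeval f p ^ (j - 1)) ⊔
          (LinearMap.ker (aeval f p ^ (j + 1))).map (aeval f p)) (H j) ∧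
        (LinearMap.ker (aeval f p ^ (j - 1)) ⊔
            (LinearMap.ker (aeval f p ^ (j + 1))).map (aeval f p)) ⊔ H j
          = LinearMap.ker (aeval f p ^ j))
    (F : ℕ → Submodule k V)
    (hF0 : F 0 = LinearMap.ker (aeval f p ^ (i - 1)))
    (hFm : ∀ m, 1 ≤ m → m ≤ n - i → F m = (H (i + m)).map (aeval f p ^ m))
    (hFtop : ∀ m, n - i < m → F m = ⊥) :
    iSupIndep F ∧
      (⨆ m, F m) = LinearMap.ker (aeval f p ^ (i - 1)) ⊔
        (LinearMap.ker (aeval f p ^ (i + 1))).map (aeval f p) := by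
  have hP : aeval f p ^ n = 0 := by rw [← map_pow, ← hmin, minpoly.aeval]
  have hbot : ∀ m ∉ insert 0 (Finset.Icc 1 (n - i)), F m = ⊥ := fun m hm =>
    hFtop m (by simp only [Finset.mem_insert, Finset.mem_Icc, not_or] at hm; omega)
  refine ⟨iSupIndep_of_supIndep_of_eq_bot
    (Module.End.supIndep_insert_zero_Icc hP hi1 hcompl hF0 hFm le_rfl (by omega)) hbot, ?_⟩
  rw [iSup_eq_finset_sup_of_eq_bot hbot, Module.End.sup_insert_zero_Icc_eq hP hi1
    (fun j hj hjn => (hcompl j hj hjn).2) hF0 hFm le_rfl (by omega), pow_one]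

/-- Let `V` be an arbitrary `k`-vector space and `f` an endomorphism of `V`
whose annihilator polynomial is `a_f(x) = p(x)^n` with `p(x)` monic irreducible.  Suppose that
for each `j` with `i+1 ≤ j ≤ n`, `H j` is a `k`-subspace of `Ker p(f)^j` satisfying
`Ker p(f)^j = (Ker p(f)^{j-1} + p(f)(Ker p(f)^{j+1})) ⊕ H j`.  Then for every `1 ≤ i ≤ n` the
sum `Ker p(f)^{i-1} + p(f)^{n-i}(H n) + ⋯ + p(f)(H (i+1))` is direct and equals
`Ker p(f)^{i-1} + p(f)(Ker p(f)^{i+1})`.  (The family `F` below lists the summands: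
`F 0 = Ker p(f)^{i-1}` and `F m = p(f)^m (H (i+m))` for `1 ≤ m ≤ n - i`, the remaining
members being zero.) -/
theorem stmt_8 {k : Type*} [Field k] {V : Type*} [AddCommGroup V] [Module k V]
    (f : Module.End k V) (p : k[X]) (n : ℕ)
    (hmonic : p.Monic) (hirr : Irreducible p)
    (hmin : minpoly k f = p ^ n)
    (i : ℕ) (hi1 : 1 ≤ i) (hin : i ≤ n)
    (H : ℕ → Submodule k V)
    (hcompl : ∀ j, i + 1 ≤ j → j ≤ n →
      Disjoint (LinearMap.ker (aeval f p ^ (j - 1)) ⊔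
          (LinearMap.ker (aeval f p ^ (j + 1))).map (aeval f p)) (H j) ∧
        (LinearMap.ker (aeval f p ^ (j - 1)) ⊔
            (LinearMap.ker (aeval f p ^ (j + 1))).map (aeval f p)) ⊔ H j
          = LinearMap.ker (aeval f p ^ j))
    (F : ℕ → Submodule k V)
    (hF0 : F 0 = LinearMap.ker (aeval f p ^ (i - 1)))
    (hFm : ∀ m, 1 ≤ m → m ≤ n - i → F m = (H (i + m)).map (aeval f p ^ m))
    (hFtop : ∀ m, n - i < m → F m = ⊥) :
    iSupIndep F ∧
      (⨆ m, F m) = LinearMap.ker (aeval f p ^ (i - 1)) ⊔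
        (LinearMap.ker (aeval f p ^ (i + 1))).map (aeval f p) :=
  stmt_8_general f p n hmin i hi1 H hcompl F hF0 hFm hFtop
end

section
/- (Well-definedness of the invariants) Let V be an arbitrary k-vector space and f an endomorphism of V whose annihilator polynomial is a_f(x) = p(x)^n with p(x) monic irreducible. If V, regarded as a k[x]-module via q(x)·v = q(f)(v), is isomorphic to ⊕_{i=1}^{n} (k[x]/(p(x)^i))^{(S_i)} for some index sets S_1, …, S_n, then for each 1 ≤ i ≤ n the cardinality of S_i equals ν_i(V, p(f)); in particular the multiplicities in any such decomposition are independent of the decomposition chosen. -/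
open Polynomial Module

universe u v w

open DirectSum

/-! `ν_j` is defined through kernels of powers of `p` and multiplication by `p`, so it is
invariant under `k[x]`-linear isomorphisms and may be computed on `⊕ₓ k[x]/(p^(d x + 1))`.
There, reducing modulo `p` the components with `d x + 1 = j` maps `ker p^j` onto
`⊕_{d x + 1 = j} k[x]/(p)`, with kernel exactly `ker p^(j-1) + p • ker p^(j+1)`: components of
smaller order lie in `ker p^(j-1)`, components of larger order lie in `p • ker p^(j+1)`, and a
component of order exactly `p^j` lies there iff its reduction vanishes. -/

namespace Submodule

variable {R : Type*} [CommRing R] {M N : Type*} [AddCommGroup M] [Module R M]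
  [AddCommGroup N] [Module R N]

theorem map_torsionBy_le (f : M →ₗ[R] N) (a : R) :
    (torsionBy R M a).map f ≤ torsionBy R N a := by
  rintro _ ⟨x, hx, rfl⟩
  rw [SetLike.mem_coe, mem_torsionBy_iff] at hx
  rw [mem_torsionBy_iff, ← map_smul, hx, map_zero]

theorem map_torsionBy_equiv (e : M ≃ₗ[R] N) (a : R) :
    (torsionBy R M a).map (e : M →ₗ[R] N) = torsionBy R N a := by
  refine le_antisymm (map_torsionBy_le _ a) fun x hx => ?_
  exact ⟨e.symm x, map_torsionBy_le (e.symm : N →ₗ[R] M) a ⟨x, hx, rfl⟩,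
    e.apply_symm_apply x⟩

variable (M) in
def nuDenominator (p : R) (j : ℕ) : Submodule R M :=
  torsionBy R M (p ^ (j - 1)) ⊔ (torsionBy R M (p ^ (j + 1))).map (LinearMap.lsmul R M p)

theorem map_nuDenominator_le (f : M →ₗ[R] N) (p : R) (j : ℕ) :
    (nuDenominator M p j).map f ≤ nuDenominator N p j := by
  rw [nuDenominator, map_sup, ← map_comp,
    show f ∘ₗ LinearMap.lsmul R M p = LinearMap.lsmul R N p ∘ₗ f from
      LinearMap.ext fun x => map_smul f p x, map_comp]
  exact sup_le_sup (map_torsionBy_le f _) (map_mono (map_torsionBy_le f _))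

theorem map_nuDenominator_equiv (e : M ≃ₗ[R] N) (p : R) (j : ℕ) :
    (nuDenominator M p j).map (e : M →ₗ[R] N) = nuDenominator N p j := by
  refine le_antisymm (map_nuDenominator_le _ p j) fun x hx => ?_
  exact ⟨e.symm x, map_nuDenominator_le (e.symm : N →ₗ[R] M) p j ⟨x, hx, rfl⟩,
    e.apply_symm_apply x⟩

end Submodule

open Submodule

section NuQuotient

variable {R : Type*} [CommRing R] {M N : Type*} [AddCommGroup M] [Module R M]
  [AddCommGroup N] [Module R N]

variable (M) in
/-- For `M = Module.AEval' f` this is definitionally `Qmod f p j`. -/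
abbrev NuQuotient (p : R) (j : ℕ) : Type _ :=
  torsionBy R M (p ^ j) ⧸ (nuDenominator M p j).comap (torsionBy R M (p ^ j)).subtype

noncomputable def NuQuotient.congr (e : M ≃ₗ[R] N) (p : R) (j : ℕ) :
    NuQuotient M p j ≃ₗ[R] NuQuotient N p j :=
  let eK := (e.submoduleMap _).trans (LinearEquiv.ofEq _ _ (map_torsionBy_equiv e (p ^ j)))
  Quotient.equiv _ _ eK <| by
    ext x
    rw [map_equiv_eq_comap_symm, mem_comap, mem_comap, mem_comap, subtype_apply, subtype_apply,
      ← map_nuDenominator_equiv e p j, mem_map_equiv]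
    rfl

end NuQuotient

namespace Ideal.Quotient

variable {R : Type*} [CommRing R] {p : R}

theorem smul_mk_eq_mk_mul (I : Ideal R) (r s : R) : r • mk I s = mk I (r * s) := by
  rw [Algebra.smul_def, algebraMap_eq, map_mul]

theorem pow_smul_eq_zero_of_le {m a : ℕ} (h : m ≤ a) (c : R ⧸ span {p ^ m}) :
    p ^ a • c = 0 := by
  obtain ⟨r, rfl⟩ := mk_surjective c
  rw [smul_mk_eq_mk_mul, eq_zero_iff_mem, mem_span_singleton]
  exact (pow_dvd_pow p h).mul_right r

theorem smul_eq_zero_span_singleton (c : R ⧸ span {p}) : p • c = 0 := by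
  obtain ⟨r, rfl⟩ := mk_surjective c
  rw [smul_mk_eq_mk_mul, eq_zero_iff_mem, mem_span_singleton]
  exact dvd_mul_right p r

theorem exists_eq_pow_smul_of_pow_smul_eq_zero [IsDomain R] (hp : p ≠ 0) {a m : ℕ} (h : a ≤ m)
    {c : R ⧸ span {p ^ m}} (hc : p ^ a • c = 0) : ∃ t, c = p ^ (m - a) • t := by
  obtain ⟨r, rfl⟩ := mk_surjective c
  rw [smul_mk_eq_mk_mul, eq_zero_iff_mem, mem_span_singleton, ← Nat.add_sub_cancel' h, pow_add,
    mul_dvd_mul_iff_left (pow_ne_zero a hp)] at hc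
  obtain ⟨t, rfl⟩ := hc
  exact ⟨mk _ t, by rw [smul_mk_eq_mk_mul]⟩

end Ideal.Quotient

open Ideal.Quotient (pow_smul_eq_zero_of_le exists_eq_pow_smul_of_pow_smul_eq_zero
  smul_eq_zero_span_singleton smul_mk_eq_mk_mul)

section CyclicReduction

variable {R : Type*} [CommRing R] {p : R}

variable (p) in
noncomputable def cyclicReduction (m : ℕ) :
    (R ⧸ Ideal.span {p ^ (m + 1)}) →ₗ[R] R ⧸ Ideal.span {p} :=
  Submodule.factor <| Ideal.span_singleton_le_span_singleton.mpr (dvd_pow_self p m.succ_ne_zero)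

theorem cyclicReduction_mk (m : ℕ) (r : R) :
    cyclicReduction p m (Ideal.Quotient.mk _ r) = Ideal.Quotient.mk _ r :=
  rfl

theorem cyclicReduction_surjective (m : ℕ) : Function.Surjective (cyclicReduction p m) := by
  intro c
  obtain ⟨r, rfl⟩ := Ideal.Quotient.mk_surjective c
  exact ⟨Ideal.Quotient.mk _ r, rfl⟩

theorem exists_eq_smul_of_cyclicReduction_eq_zero {m : ℕ} {c : R ⧸ Ideal.span {p ^ (m + 1)}}
    (hc : cyclicReduction p m c = 0) : ∃ t, c = p • t := by
  obtain ⟨r, rfl⟩ := Ideal.Quotient.mk_surjective c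
  rw [cyclicReduction_mk, Ideal.Quotient.eq_zero_iff_mem, Ideal.mem_span_singleton] at hc
  obtain ⟨t, rfl⟩ := hc
  exact ⟨Ideal.Quotient.mk _ t, by rw [smul_mk_eq_mk_mul]⟩

variable [IsDomain R]

theorem cyclicReduction_eq_zero_of_pow_smul_eq_zero (hp : p ≠ 0) {m : ℕ}
    {c : R ⧸ Ideal.span {p ^ (m + 1)}} (hc : p ^ m • c = 0) : cyclicReduction p m c = 0 := by
  obtain ⟨t, rfl⟩ := exists_eq_pow_smul_of_pow_smul_eq_zero hp (Nat.le_add_right m 1) hc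
  rw [Nat.add_sub_cancel_left, pow_one, map_smul, smul_eq_zero_span_singleton]

theorem mem_nuDenominator_of_cyclicReduction_eq_zero (hp : p ≠ 0) {m j : ℕ}
    {c : R ⧸ Ideal.span {p ^ (m + 1)}} (hc : p ^ (j + 1) • c = 0)
    (hred : m = j → cyclicReduction p m c = 0) : c ∈ nuDenominator _ p (j + 1) := by
  rcases lt_or_ge m j with hlt | hle
  · exact mem_sup_left <| (mem_torsionBy_iff _ _).mpr (pow_smul_eq_zero_of_le hlt c)
  refine mem_sup_right ?_
  suffices ∃ t, p ^ (j + 2) • t = 0 ∧ c = p • t by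
    obtain ⟨t, ht, rfl⟩ := this
    exact ⟨t, (mem_torsionBy_iff _ _).mpr ht, rfl⟩
  rcases hle.eq_or_lt with rfl | hlt
  · obtain ⟨t, rfl⟩ := exists_eq_smul_of_cyclicReduction_eq_zero (hred rfl)
    exact ⟨t, pow_smul_eq_zero_of_le (by omega) t, rfl⟩
  · obtain ⟨t, rfl⟩ := exists_eq_pow_smul_of_pow_smul_eq_zero hp (by omega) hc
    refine ⟨p ^ (m - j - 1) • t, ?_, ?_⟩
    · rw [smul_smul, ← pow_add]
      exact pow_smul_eq_zero_of_le (by omega) t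
    · rw [smul_smul, ← pow_succ']
      congr 2
      omega

end CyclicReduction

section

variable {R : Type*} [CommRing R] {p : R} {ι : Type*} {d : ι → ℕ} {j : ℕ}

variable (p d) in
abbrev CyclicSum : Type _ := ⨁ x : ι, R ⧸ Ideal.span {p ^ (d x + 1)}

namespace CyclicSum

variable (p d j) in
noncomputable def layerReduction :
    CyclicSum p d →ₗ[R] ⨁ _ : {x // d x = j}, R ⧸ Ideal.span {p} :=
  DFinsupp.subtypeDomainLinearMap R (fun _ => R ⧸ Ideal.span {p}) (d · = j) ∘ₗ
    DFinsupp.mapRange.linearMap fun x => cyclicReduction p (d x)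

theorem layerReduction_apply (v : CyclicSum p d) (x : {x // d x = j}) :
    layerReduction p d j v x = cyclicReduction p (d x) (v x) :=
  rfl

theorem layerReduction_of [DecidableEq ι] {x : ι} (hx : d x = j)
    (c : R ⧸ Ideal.span {p ^ (d x + 1)}) :
    layerReduction p d j (of _ x c) = of _ ⟨x, hx⟩ (cyclicReduction p (d x) c) := by
  ext ⟨y, hy⟩
  rw [layerReduction_apply]
  by_cases h : x = y
  · subst h
    simp
  · rw [of_eq_of_ne _ _ _ (Ne.symm h), map_zero, of_eq_of_ne _ _ _ (by simpa using Ne.symm h)]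

theorem exists_mem_torsionBy_layerReduction_eq (w : ⨁ _ : {x // d x = j}, R ⧸ Ideal.span {p}) :
    ∃ v ∈ torsionBy R (CyclicSum p d) (p ^ (j + 1)), layerReduction p d j v = w := by
  classical
  induction w using DirectSum.induction_on with
  | zero => exact ⟨0, zero_mem _, map_zero _⟩
  | of x c =>
    obtain ⟨c, rfl⟩ := cyclicReduction_surjective (d x) c
    refine ⟨of (fun x => R ⧸ Ideal.span {p ^ (d x + 1)}) x c, ?_, layerReduction_of x.2 c⟩
    rw [mem_torsionBy_iff, ← lof_eq_of R, ← map_smul, pow_smul_eq_zero_of_le (by rw [x.2]) c,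
      map_zero]
  | add w w' hw hw' =>
    obtain ⟨v, hv, rfl⟩ := hw
    obtain ⟨v', hv', rfl⟩ := hw'
    exact ⟨v + v', add_mem hv hv', map_add _ v v'⟩

variable [IsDomain R]

theorem mem_nuDenominator_of_layerReduction_eq_zero (hp : p ≠ 0) {v : CyclicSum p d}
    (hv : p ^ (j + 1) • v = 0) (h : layerReduction p d j v = 0) :
    v ∈ nuDenominator _ p (j + 1) := by
  classical
  rw [← sum_support_of v]
  refine sum_mem fun x _ => ?_
  have hx : p ^ (j + 1) • v x = 0 := by rw [← DirectSum.smul_apply, hv]; rfl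
  have hc := mem_nuDenominator_of_cyclicReduction_eq_zero hp hx fun hdx => by
    rw [← layerReduction_apply v ⟨x, hdx⟩, h]; rfl
  rw [← lof_eq_of R]
  exact map_nuDenominator_le _ p (j + 1) ⟨_, hc, rfl⟩

theorem nuDenominator_le_ker_layerReduction (hp : p ≠ 0) :
    nuDenominator (CyclicSum p d) p (j + 1) ≤ LinearMap.ker (layerReduction p d j) := by
  refine sup_le (fun v hv => ?_) ?_
  · rw [mem_torsionBy_iff] at hv
    ext x
    rw [layerReduction_apply]
    refine cyclicReduction_eq_zero_of_pow_smul_eq_zero hp ?_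
    rw [show p ^ d x = p ^ (j + 1 - 1) by rw [x.2]; rfl, ← DirectSum.smul_apply, hv]
    rfl
  · rintro _ ⟨u, -, rfl⟩
    rw [LinearMap.mem_ker, LinearMap.lsmul_apply, map_smul]
    ext x
    rw [DirectSum.smul_apply, smul_eq_zero_span_singleton]
    rfl

noncomputable def nuQuotientEquiv (hp : p ≠ 0) :
    NuQuotient (CyclicSum p d) p (j + 1) ≃ₗ[R] ⨁ _ : {x // d x = j}, R ⧸ Ideal.span {p} :=
  let ψ := layerReduction p d j ∘ₗ (torsionBy R (CyclicSum p d) (p ^ (j + 1))).subtype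
  have hker : LinearMap.ker ψ =
      (nuDenominator _ p (j + 1)).comap (torsionBy R (CyclicSum p d) (p ^ (j + 1))).subtype := by
    ext ⟨v, hv⟩
    rw [LinearMap.mem_ker, mem_comap, LinearMap.comp_apply, subtype_apply]
    exact ⟨mem_nuDenominator_of_layerReduction_eq_zero hp hv,
      fun h => nuDenominator_le_ker_layerReduction hp h⟩
  have hψ : Function.Surjective ψ := fun w => by
    obtain ⟨v, hv, rfl⟩ := exists_mem_torsionBy_layerReduction_eq w
    exact ⟨⟨v, hv⟩, rfl⟩
  (quotEquivOfEq _ _ hker.symm).trans (ψ.quotKerEquivOfSurjective hψ)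

end CyclicSum

end

theorem rank_quotient_eq_of_linearEquiv_directSum {R : Type u} [CommRing R] {I : Ideal R}
    [I.IsMaximal] {M : Type v} [AddCommGroup M] [Module R M] [Module (R ⧸ I) M]
    [IsScalarTower R (R ⧸ I) M] {T : Type v} (e : M ≃ₗ[R] ⨁ _ : T, R ⧸ I) :
    Module.rank (R ⧸ I) M = Cardinal.mk T := by
  simpa using (e.extendScalarsOfSurjective (Ideal.Quotient.mk_surjective (I := I))).lift_rank_eq

theorem stmt_10_general {k : Type u} [Field k] {V : Type v} [AddCommGroup V] [Module k V]
    (f : Module.End k V) (p : k[X]) (n : ℕ)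
    (hirr : Irreducible p)
    (S : ℕ → Type v)
    (e : Module.AEval' f ≃ₗ[k[X]]
      ⨁ x : Σ _i : Fin n, S ((_i : ℕ) + 1), k[X] ⧸ Ideal.span {p ^ ((x.1 : ℕ) + 1)}) :
    ∀ i : Fin n, Cardinal.mk (S ((i : ℕ) + 1)) = nu f p ((i : ℕ) + 1) := by
  intro i
  have : (Ideal.span {p}).IsMaximal := PrincipalIdealRing.isMaximal_of_irreducible hirr
  let E : Qmod f p (i + 1) ≃ₗ[k[X]]
      ⨁ _ : {x : Σ j : Fin n, S (j + 1) // (x.1 : ℕ) = i}, k[X] ⧸ Ideal.span {p} :=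
    (NuQuotient.congr e p (i + 1)).trans (CyclicSum.nuQuotientEquiv hirr.ne_zero)
  have hfiber : {x : Σ j : Fin n, S (j + 1) // (x.1 : ℕ) = i} ≃ S (i + 1) :=
    (Equiv.subtypeEquivRight fun _ => Fin.val_inj).trans (Equiv.sigmaSubtype i)
  rw [nu, rank_quotient_eq_of_linearEquiv_directSum E, Cardinal.mk_congr hfiber]

/-- **Well-definedness of the invariants.**  Let `V` be an arbitrary `k`-vector
space and `f` an endomorphism of `V` whose annihilator polynomial is `a_f(x) = p(x)^n` with
`p(x)` monic irreducible.  If `V`, regarded as a `k[x]`-module via `q(x) • v = q(f)(v)` (the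
type synonym `Module.AEval' f`), is isomorphic to `⊕_{i=1}^{n} (k[x]/(p(x)^i))^{(S i)}` for
some index sets `S 1, …, S n`, then for each `1 ≤ i ≤ n` the cardinality of `S i` equals
`ν_i(V, p(f))`; in particular the multiplicities in any such decomposition are independent of
the decomposition chosen. -/
theorem stmt_10 {k : Type u} [Field k] {V : Type v} [AddCommGroup V] [Module k V]
    (f : Module.End k V) (p : k[X]) (n : ℕ)
    (hmonic : p.Monic) (hirr : Irreducible p)
    (hmin : minpoly k f = p ^ n)
    (S : ℕ → Type v)
    (e : Module.AEval' f ≃ₗ[k[X]]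
      ⨁ x : Σ _i : Fin n, S ((_i : ℕ) + 1), k[X] ⧸ Ideal.span {p ^ ((x.1 : ℕ) + 1)}) :
    ∀ i : Fin n, Cardinal.mk (S ((i : ℕ) + 1)) = nu f p ((i : ℕ) + 1) :=
  stmt_10_general f p n hirr S e
end
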